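/- On the elliptic curve E over Q with coefficients (a1,a2,a3,a4,a6) = (282887999996745, -1871148179781457712818452480, -529325366275926422138597740307015937177600, 0, 0), the point (0,0) is a rational point of order exactly 4. -/

import Mathlib

def E : WeierstrassCurve.Affine ℚ :=
  ⟨282887999996745, -1871148179781457712818452480,
    -529325366275926422138597740307015937177600, 0, 0⟩

/-!
When `a₄ = a₆ = 0` the tangent to the curve at `P = (0, 0)` is the line `y = 0`, which meets the
curve again at `x = -a₂`; hence `2P = (-a₂, a₁a₂ - a₃)`. If moreover `a₁a₂ = a₃` (Tate normal form
with `c = 0`), then `2P` lies on the line `2y + a₁x + a₃ = 0`, so it is a point of order 2 and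
`P` has order 4.
-/

namespace WeierstrassCurve.Affine

variable {F : Type*} [Field F] {W : Affine F}

lemma a₃_ne_zero_of_nonsingular_zero (h : W.Nonsingular 0 0) (ha₄ : W.a₄ = 0) : W.a₃ ≠ 0 := by
  simpa [ha₄] using (nonsingular_zero.mp h).2

lemma zero_ne_negY_zero_zero (h : W.Nonsingular 0 0) (ha₄ : W.a₄ = 0) : (0 : F) ≠ W.negY 0 0 := by
  simpa [negY, eq_comm] using a₃_ne_zero_of_nonsingular_zero h ha₄

variable [DecidableEq F]

lemma slope_zero_zero (h : W.Nonsingular 0 0) (ha₄ : W.a₄ = 0) : W.slope 0 0 0 0 = 0 := by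
  rw [slope_of_Y_ne rfl (zero_ne_negY_zero_zero h ha₄)]
  simp [ha₄]

lemma two_nsmul_some_zero_zero (h : W.Nonsingular 0 0) (ha₄ : W.a₄ = 0) :
    ∃ h₂ : W.Nonsingular (-W.a₂) (W.a₁ * W.a₂ - W.a₃), 2 • Point.some 0 0 h = Point.some _ _ h₂ := by
  have hy₀ := zero_ne_negY_zero_zero h ha₄
  have hx : W.addX 0 0 (W.slope 0 0 0 0) = -W.a₂ := by simp [slope_zero_zero h ha₄, addX]
  have hy : W.addY 0 0 0 (W.slope 0 0 0 0) = W.a₁ * W.a₂ - W.a₃ := by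
    simp only [slope_zero_zero h ha₄, addY, negAddY, addX, negY]
    ring
  refine ⟨hx ▸ hy ▸ nonsingular_add h h fun hxy => hy₀ hxy.2, ?_⟩
  rw [two_nsmul, Point.add_of_Y_ne hy₀, Point.some.injEq]
  exact ⟨hx, hy⟩

lemma addOrderOf_some_zero_zero (h : W.Nonsingular 0 0) (ha₄ : W.a₄ = 0)
    (htate : W.a₁ * W.a₂ = W.a₃) : addOrderOf (Point.some 0 0 h) = 4 := by
  obtain ⟨h₂, hP₂⟩ := two_nsmul_some_zero_zero h ha₄
  have hP₂_ne : 2 • Point.some 0 0 h ≠ 0 := hP₂ ▸ Point.some_ne_zero h₂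
  have hP₂_two_torsion : 2 • Point.some 0 0 h + 2 • Point.some 0 0 h = 0 := by
    rw [hP₂]
    exact Point.add_self_of_Y_eq <| by rw [negY]; linear_combination htate
  exact addOrderOf_eq_prime_pow (p := 2) (n := 1) (by rwa [pow_one])
    (by rwa [pow_succ, pow_one, mul_nsmul, two_nsmul (2 • _)])

end WeierstrassCurve.Affine

/-- On the first rank-13 record curve with torsion `ℤ/4ℤ`, the point `(0,0)` has order
exactly 4. -/
theorem point_order_four :
    ∃ h : E.Nonsingular 0 0, addOrderOf (WeierstrassCurve.Affine.Point.some 0 0 h) = 4 := by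
  have h : E.Nonsingular 0 0 := WeierstrassCurve.Affine.nonsingular_zero.mpr (by norm_num [E])
  exact ⟨h, WeierstrassCurve.Affine.addOrderOf_some_zero_zero h rfl (by norm_num [E])⟩
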